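/- Let G be a finite simple graph and f a uniformly random labeling with fixed label counts. For distinct labels i != j, Cov(R_{ii}, R_{jj}) = (|G|^2 - sum_t |G_t|^2 + |G|) * n_i n_j (n_i - 1)(n_j - 1)/(N(N-1)(N-2)(N-3)) - E(R_{ii}) E(R_{jj}), where E(R_{kk}) = |G| n_k(n_k-1)/(N(N-1)). -/

import Mathlib

open Finset

variable {V : Type*} [Fintype V] [DecidableEq V] {K : ℕ}

/-- The set of labelings `f : V → Fin K` with exactly `n k` vertices labeled `k`. -/
def labelings (n : Fin K → ℕ) : Finset (V → Fin K) :=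
  Finset.univ.filter fun f => ∀ k, (Finset.univ.filter fun x => f x = k).card = n k

/-- Probability of an event under the uniform distribution on `labelings n`. -/
noncomputable def prob (n : Fin K → ℕ) (P : (V → Fin K) → Prop) [DecidablePred P] : ℝ :=
  (((labelings n).filter P).card : ℝ) / (((labelings n : Finset (V → Fin K))).card : ℝ)

/-- Expectation of a real random variable under the uniform distribution on `labelings n`. -/
noncomputable def expect (n : Fin K → ℕ) (X : (V → Fin K) → ℝ) : ℝ :=
  (∑ f ∈ labelings n, X f) / (((labelings n : Finset (V → Fin K))).card : ℝ)

/-- Covariance under the uniform distribution on `labelings n`. -/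
noncomputable def covar (n : Fin K → ℕ) (X Y : (V → Fin K) → ℝ) : ℝ :=
  expect n (fun f => (X f - expect n X) * (Y f - expect n Y))

/-- `Rcount G f i j` is the number of edges of `G` whose endpoint labels (under `f`)
are exactly the unordered pair `{i, j}`. -/
def Rcount (G : SimpleGraph V) [DecidableRel G.Adj] (f : V → Fin K) (i j : Fin K) : ℕ :=
  (G.edgeFinset.filter fun e => Sym2.map f e = s(i, j)).card

/-!
Expand `R_ii R_jj` as the number of ordered pairs of edges `(e, e')` with `e` labelled `ii` and
`e'` labelled `jj`. As `i ≠ j`, only vertex-disjoint pairs contribute. The uniform labeling is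
invariant under permutations of `V`, so the number of labelings giving prescribed labels to a fixed
injective tuple of vertices does not depend on the tuple; averaging over all tuples, the
probability that two (resp. 2 + 2) given distinct vertices get the labels `ii` (resp. `ii`, `jj`)
is the ratio of falling factorials `(n_i)_2 / (N)_2` (resp. `(n_i)_2 (n_j)_2 / (N)_4`). Finally
`∑_t |G_t|^2` counts ordered pairs of edges weighted by their number of common vertices, so there
are `|G|^2 - (∑_t |G_t|^2 - |G|)` ordered pairs of disjoint edges.
-/

theorem card_filter_embedding_forall_eq {W α ι : Type*} [Fintype W] [Fintype ι] [DecidableEq α]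
    (f : W → α) (k : α) :
    #{h : ι ↪ W | ∀ x, f (h x) = k} = (#{v | f v = k}).descFactorial (Fintype.card ι) := by
  rw [← Fintype.card_subtype, ← Fintype.card_subtype, ← Fintype.card_embedding_eq]
  exact Fintype.card_congr (Equiv.codRestrict ι {v | f v = k})

theorem card_filter_sum_embedding {α β W : Type*} [Fintype α] [Fintype β] [Fintype W]
    (P : (α ↪ W) → Prop) (Q : (β ↪ W) → Prop) [DecidablePred P] [DecidablePred Q]
    (hPQ : ∀ g h, P g → Q h → Disjoint (Set.range g) (Set.range h)) :
    #{h : α ⊕ β ↪ W | P (.trans .inl h) ∧ Q (.trans .inr h)}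
      = #{g | P g} * #{h | Q h} := by
  simp only [← Fintype.card_subtype, ← Fintype.card_prod]
  refine Fintype.card_congr <|
    (Equiv.sumEmbeddingEquivProdEmbeddingDisjoint.subtypeEquiv fun _ => Iff.rfl).trans <|
    (Equiv.subtypeSubtypeEquivSubtype fun hp => hPQ _ _ hp.1 hp.2).trans <|
    Equiv.subtypeProdEquivProd

theorem Nat.cast_descFactorial_four {S : Type*} [CommRing S] (a : ℕ) :
    (a.descFactorial 4 : S) = a * (a - 1) * (a - 2) * (a - 3) := by
  rcases a with _ | _ | _ | a <;> simp [Nat.descFactorial_succ]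
  ring

theorem Sym2.map_eq_diag_iff {α β : Type*} {f : α → β} {e : Sym2 α} {b : β} :
    e.map f = s(b, b) ↔ ∀ a ∈ e, f a = b := by
  induction e using Sym2.ind with
  | _ x y => simp

theorem Sym2.card_toFinset_inter {α : Type*} [DecidableEq α] {z z' : Sym2 α} (hz : ¬z.IsDiag)
    (hz' : ¬z'.IsDiag) :
    #(z.toFinset ∩ z'.toFinset)
      = (if Disjoint z.toFinset z'.toFinset then 0 else 1) + if z = z' then 1 else 0 := by
  by_cases heq : z = z'
  · subst heq
    simp [Sym2.card_toFinset_of_not_isDiag z hz]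
  by_cases hdisj : Disjoint z.toFinset z'.toFinset
  · simp [heq, hdisj, disjoint_iff_inter_eq_empty.mp hdisj]
  have hle : #(z.toFinset ∩ z'.toFinset) ≤ 1 := by
    refine card_le_one.mpr fun a ha b hb => ?_
    by_contra hab
    simp only [mem_inter, Sym2.mem_toFinset] at ha hb
    exact heq (((Sym2.mem_and_mem_iff hab).mp ⟨ha.1, hb.1⟩).trans
      ((Sym2.mem_and_mem_iff hab).mp ⟨ha.2, hb.2⟩).symm)
  have hpos : 0 < #(z.toFinset ∩ z'.toFinset) :=
    card_pos.mpr (not_disjoint_iff_nonempty_inter.mp hdisj)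
  simp only [heq, hdisj, if_false]
  omega

namespace SimpleGraph

variable {W : Type*} [Fintype W] [DecidableEq W] (G : SimpleGraph W) [DecidableRel G.Adj]

theorem degree_sq_eq_card_filter_mem_mem (t : W) :
    G.degree t ^ 2 = #{p ∈ G.edgeFinset ×ˢ G.edgeFinset | t ∈ p.1 ∧ t ∈ p.2} := by
  rw [← card_incidenceFinset_eq_degree, incidenceFinset_eq_filter, sq, ← card_product]
  congr 1; ext; simp [and_and_and_comm]

theorem card_filter_not_disjoint_add_card_edgeFinset :
    #{p ∈ G.edgeFinset ×ˢ G.edgeFinset | ¬Disjoint p.1.toFinset p.2.toFinset}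
        + #G.edgeFinset = ∑ t, G.degree t ^ 2 := by
  have hinter (p : Sym2 W × Sym2 W) :
      #{t | t ∈ p.1 ∧ t ∈ p.2} = #(p.1.toFinset ∩ p.2.toFinset) := by
    congr 1; ext; simp
  calc #{p ∈ G.edgeFinset ×ˢ G.edgeFinset | ¬Disjoint p.1.toFinset p.2.toFinset}
        + #G.edgeFinset
      = ∑ p ∈ G.edgeFinset ×ˢ G.edgeFinset,
          ((if Disjoint p.1.toFinset p.2.toFinset then 0 else 1)
            + if p.1 = p.2 then 1 else 0) := by
        rw [sum_add_distrib, card_filter, sum_product (f := fun p => if p.1 = p.2 then 1 else 0)]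
        simp [ite_not, filter_true_of_mem]
    _ = ∑ p ∈ G.edgeFinset ×ˢ G.edgeFinset, #(p.1.toFinset ∩ p.2.toFinset) := by
        refine sum_congr rfl fun p hp => ?_
        rw [mem_product] at hp
        exact (Sym2.card_toFinset_inter (G.not_isDiag_of_mem_edgeFinset hp.1)
          (G.not_isDiag_of_mem_edgeFinset hp.2)).symm
    _ = ∑ t, G.degree t ^ 2 := by
        simp only [degree_sq_eq_card_filter_mem_mem, card_filter, ← hinter]
        exact sum_comm

theorem card_filter_disjoint_add_sum_degree_sq :
    #{p ∈ G.edgeFinset ×ˢ G.edgeFinset | Disjoint p.1.toFinset p.2.toFinset}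
        + ∑ t, G.degree t ^ 2 = #G.edgeFinset ^ 2 + #G.edgeFinset := by
  rw [← card_filter_not_disjoint_add_card_edgeFinset, ← add_assoc,
    card_filter_add_card_filter_not, card_product, sq]

end SimpleGraph

theorem mem_labelings {n : Fin K → ℕ} {f : V → Fin K} :
    f ∈ labelings n ↔ ∀ k, #{x | f x = k} = n k := by
  simp [labelings]

theorem labelings_nonempty {n : Fin K → ℕ} (hn : ∑ k, n k = Fintype.card V) :
    (labelings (V := V) n).Nonempty := by
  obtain ⟨e⟩ : Nonempty (V ≃ Σ k, Fin (n k)) := Fintype.card_eq.mp (by simp [hn])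
  refine ⟨fun v => (e v).1, mem_labelings.mpr fun k => ?_⟩
  rw [← Fintype.card_subtype, Fintype.card_congr ((e.subtypeEquiv fun _ => Iff.rfl).trans
    (Equiv.sigmaSubtype k)), Fintype.card_fin]

theorem comp_perm_mem_labelings (n : Fin K → ℕ) (σ : Equiv.Perm V) (f : V → Fin K) :
    f ∘ σ ∈ labelings n ↔ f ∈ labelings n := by
  have hfiber (k : Fin K) : #{x | f (σ x) = k} = #{x | f x = k} :=
    card_equiv σ (by simp)
  simp [mem_labelings, hfiber]

theorem card_filter_labelings_comp_embedding_congr (n : Fin K → ℕ) {ι : Type*} [Finite ι]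
    (Q : (ι → Fin K) → Prop) [DecidablePred Q] (g h : ι ↪ V) :
    #{f ∈ labelings n | Q (f ∘ g)} = #{f ∈ labelings n | Q (f ∘ h)} := by
  obtain ⟨σ, hσ⟩ := Equiv.Perm.exists_extending_pair h g h.injective g.injective
  have hcomp (f : V → Fin K) : f ∘ σ ∘ h = f ∘ g := by ext x; simp [hσ]
  refine card_equiv ⟨(· ∘ σ), (· ∘ σ.symm), fun f => ?_, fun f => ?_⟩ fun f => ?_
  · ext; simp
  · ext; simp
  · simp [comp_perm_mem_labelings, Function.comp_assoc, hcomp]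

theorem descFactorial_mul_card_filter_labelings (n : Fin K → ℕ) {ι : Type*} [Fintype ι]
    (Q : (ι → Fin K) → Prop) [DecidablePred Q] (g : ι ↪ V) (c : ℕ)
    (hc : ∀ f ∈ labelings n, #{h : ι ↪ V | Q (f ∘ h)} = c) :
    (Fintype.card V).descFactorial (Fintype.card ι) * #{f ∈ labelings n | Q (f ∘ g)}
      = #(labelings (V := V) n) * c := by
  calc (Fintype.card V).descFactorial (Fintype.card ι) * #{f ∈ labelings n | Q (f ∘ g)}
      = ∑ h : ι ↪ V, #{f ∈ labelings n | Q (f ∘ h)} := by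
        simp [← Fintype.card_embedding_eq, card_filter_labelings_comp_embedding_congr n Q _ g]
    _ = ∑ f ∈ labelings n, #{h : ι ↪ V | Q (f ∘ h)} := by
        simp only [card_filter]; exact sum_comm
    _ = #(labelings (V := V) n) * c := by simp [sum_congr rfl hc]

theorem descFactorial_mul_card_filter_labelings_const_on (n : Fin K → ℕ) (s : Finset V)
    (k : Fin K) :
    (Fintype.card V).descFactorial #s * #{f ∈ labelings n | ∀ v ∈ s, f v = k}
      = #(labelings (V := V) n) * (n k).descFactorial #s := by
  have := descFactorial_mul_card_filter_labelings n (fun c : s → Fin K => ∀ x, c x = k)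
    (Function.Embedding.subtype (· ∈ s)) ((n k).descFactorial #s) fun f hf => by
      change #{h : s ↪ V | ∀ x, f (h x) = k} = _
      rw [card_filter_embedding_forall_eq, mem_labelings.mp hf, Fintype.card_coe]
  simpa using this

theorem descFactorial_mul_card_filter_labelings_const_on_disjoint (n : Fin K → ℕ)
    {s t : Finset V} (hst : Disjoint s t) {i j : Fin K} (hij : i ≠ j) :
    (Fintype.card V).descFactorial (#s + #t)
        * #{f ∈ labelings n | (∀ v ∈ s, f v = i) ∧ ∀ v ∈ t, f v = j}
      = #(labelings (V := V) n) * ((n i).descFactorial #s * (n j).descFactorial #t) := by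
  let g : s ⊕ t ↪ V := ⟨Sum.elim Subtype.val Subtype.val,
    Subtype.val_injective.sumElim Subtype.val_injective fun a b hab =>
      disjoint_left.mp hst a.2 (hab ▸ b.2)⟩
  have := descFactorial_mul_card_filter_labelings n
    (fun c : s ⊕ t → Fin K => (∀ x, c (.inl x) = i) ∧ ∀ y, c (.inr y) = j) g
    ((n i).descFactorial #s * (n j).descFactorial #t) fun f hf => by
      have hdisj (a : s ↪ V) (b : t ↪ V) (ha : ∀ x, f (a x) = i) (hb : ∀ y, f (b y) = j) :
          Disjoint (Set.range a) (Set.range b) := by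
        rw [Set.disjoint_left]
        rintro _ ⟨x, rfl⟩ ⟨y, hy⟩
        exact hij ((ha x).symm.trans (hy ▸ hb y))
      have := card_filter_sum_embedding _ _ hdisj
      simp only [card_filter_embedding_forall_eq, mem_labelings.mp hf] at this
      simpa using this
  simpa [g] using this

theorem covar_eq_expect_mul_sub {n : Fin K → ℕ} (hL : (labelings (V := V) n).Nonempty)
    (X Y : (V → Fin K) → ℝ) :
    covar n X Y = expect n (fun f => X f * Y f) - expect n X * expect n Y := by
  have hL0 : (#(labelings (V := V) n) : ℝ) ≠ 0 := by exact_mod_cast hL.card_pos.ne'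
  simp only [covar, _root_.expect, mul_sub, sub_mul, sum_sub_distrib, ← sum_mul, ← mul_sum,
    sum_const, nsmul_eq_mul]
  field_simp
  ring

theorem expect_eq_div_of_mul_sum_eq {n : Fin K → ℕ} (hL : (labelings (V := V) n).Nonempty)
    {X : (V → Fin K) → ℝ} {a c : ℝ} (ha : a ≠ 0)
    (h : a * ∑ f ∈ labelings n, X f = #(labelings (V := V) n) * c) :
    expect n X = c / a := by
  have hL0 : (#(labelings (V := V) n) : ℝ) ≠ 0 := by exact_mod_cast hL.card_pos.ne'
  rw [_root_.expect, div_eq_div_iff hL0 ha]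
  linear_combination h

section Rcount

variable (G : SimpleGraph V) [DecidableRel G.Adj] (n : Fin K → ℕ)

theorem sum_Rcount_eq_sum_card_filter (k : Fin K) :
    ∑ f ∈ labelings n, Rcount G f k k
      = ∑ e ∈ G.edgeFinset, #{f ∈ labelings n | ∀ v ∈ e.toFinset, f v = k} := by
  simp only [Rcount, card_filter, Sym2.map_eq_diag_iff, Sym2.mem_toFinset]
  exact sum_comm

theorem descFactorial_two_mul_sum_Rcount (k : Fin K) :
    (Fintype.card V).descFactorial 2 * ∑ f ∈ labelings n, Rcount G f k k
      = #(labelings (V := V) n) * (#G.edgeFinset * (n k).descFactorial 2) := by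
  have hedge (e : Sym2 V) (he : e ∈ G.edgeFinset) :
      (Fintype.card V).descFactorial 2 * #{f ∈ labelings n | ∀ v ∈ e.toFinset, f v = k}
        = #(labelings (V := V) n) * (n k).descFactorial 2 := by
    rw [← Sym2.card_toFinset_of_not_isDiag e (G.not_isDiag_of_mem_edgeFinset he)]
    exact descFactorial_mul_card_filter_labelings_const_on n e.toFinset k
  rw [sum_Rcount_eq_sum_card_filter, mul_sum, sum_congr rfl hedge, sum_const, smul_eq_mul]
  ring

theorem Rcount_mul_Rcount (f : V → Fin K) (i j : Fin K) :
    Rcount G f i i * Rcount G f j j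
      = #{p ∈ G.edgeFinset ×ˢ G.edgeFinset |
          (∀ v ∈ p.1.toFinset, f v = i) ∧ ∀ v ∈ p.2.toFinset, f v = j} := by
  rw [Rcount, Rcount, ← card_product]
  congr 1; ext; simp [Sym2.map_eq_diag_iff, and_and_and_comm]

theorem descFactorial_four_mul_sum_Rcount_mul_Rcount {i j : Fin K} (hij : i ≠ j) :
    (Fintype.card V).descFactorial 4 * ∑ f ∈ labelings n, Rcount G f i i * Rcount G f j j
      = #(labelings (V := V) n)
          * (#{p ∈ G.edgeFinset ×ˢ G.edgeFinset | Disjoint p.1.toFinset p.2.toFinset}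
            * ((n i).descFactorial 2 * (n j).descFactorial 2)) := by
  have hswap : ∑ f ∈ labelings n, Rcount G f i i * Rcount G f j j
      = ∑ p ∈ G.edgeFinset ×ˢ G.edgeFinset, #{f ∈ labelings n |
          (∀ v ∈ p.1.toFinset, f v = i) ∧ ∀ v ∈ p.2.toFinset, f v = j} := by
    simp only [Rcount_mul_Rcount, card_filter]
    exact sum_comm
  rw [hswap, mul_sum, mul_left_comm, card_eq_sum_ones, sum_filter, sum_mul]
  refine sum_congr rfl fun p hp => ?_
  rw [mem_product] at hp
  split_ifs with hdisj
  · have := descFactorial_mul_card_filter_labelings_const_on_disjoint n hdisj hij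
    rw [Sym2.card_toFinset_of_not_isDiag _ (G.not_isDiag_of_mem_edgeFinset hp.1),
      Sym2.card_toFinset_of_not_isDiag _ (G.not_isDiag_of_mem_edgeFinset hp.2)] at this
    rw [one_mul]
    exact this
  · obtain ⟨v, hv₁, hv₂⟩ := not_disjoint_iff.mp hdisj
    rw [zero_mul, mul_eq_zero, card_eq_zero, filter_eq_empty_iff]
    exact .inr fun f _ hf => hij ((hf.1 v hv₁).symm.trans (hf.2 v hv₂))

end Rcount

theorem stmt_10 (G : SimpleGraph V) [DecidableRel G.Adj]
    (n : Fin K → ℕ) (N : ℕ) (hN : N = Fintype.card V) (hN4 : 4 ≤ N)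
    (hsum : ∑ k, n k = N) (i j : Fin K) (hij : i ≠ j)
    (m D : ℝ) (hm : m = (G.edgeFinset.card : ℝ))
    (hD : D = ∑ t : V, (G.degree t : ℝ) ^ 2) :
    covar n (fun f : V → Fin K => (Rcount G f i i : ℝ))
        (fun f : V → Fin K => (Rcount G f j j : ℝ))
      = (m ^ 2 - D + m) * ((n i : ℝ) * (n j : ℝ) * ((n i : ℝ) - 1) * ((n j : ℝ) - 1)
            / ((N : ℝ) * ((N : ℝ) - 1) * ((N : ℝ) - 2) * ((N : ℝ) - 3)))
        - (m * (n i : ℝ) * ((n i : ℝ) - 1) / ((N : ℝ) * ((N : ℝ) - 1)))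
          * (m * (n j : ℝ) * ((n j : ℝ) - 1) / ((N : ℝ) * ((N : ℝ) - 1))) := by
  subst hN hm hD
  have hL := labelings_nonempty hsum
  have hfac {r : ℕ} (hr : r ≤ 4) : ((Fintype.card V).descFactorial r : ℝ) ≠ 0 := by
    rw [Nat.cast_ne_zero, Ne, Nat.descFactorial_eq_zero_iff_lt]
    omega
  have hexpect (k : Fin K) : expect n (fun f => (Rcount G f k k : ℝ))
      = #G.edgeFinset * (n k).descFactorial 2 / (Fintype.card V).descFactorial 2 :=
    expect_eq_div_of_mul_sum_eq hL (hfac (by norm_num))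
      (by exact_mod_cast descFactorial_two_mul_sum_Rcount G n k)
  have hexpect_mul : expect n (fun f => (Rcount G f i i : ℝ) * Rcount G f j j)
      = #{p ∈ G.edgeFinset ×ˢ G.edgeFinset | Disjoint p.1.toFinset p.2.toFinset}
          * ((n i).descFactorial 2 * (n j).descFactorial 2) / (Fintype.card V).descFactorial 4 :=
    expect_eq_div_of_mul_sum_eq hL (hfac le_rfl)
      (by exact_mod_cast descFactorial_four_mul_sum_Rcount_mul_Rcount G n hij)
  have hdisjoint :
      (#{p ∈ G.edgeFinset ×ˢ G.edgeFinset | Disjoint p.1.toFinset p.2.toFinset} : ℝ)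
        = #G.edgeFinset ^ 2 - ∑ t, (G.degree t : ℝ) ^ 2 + #G.edgeFinset := by
    have : (#{p ∈ G.edgeFinset ×ˢ G.edgeFinset | Disjoint p.1.toFinset p.2.toFinset} : ℝ)
        + ∑ t, (G.degree t : ℝ) ^ 2 = #G.edgeFinset ^ 2 + #G.edgeFinset := by
      exact_mod_cast G.card_filter_disjoint_add_sum_degree_sq
    linarith
  rw [covar_eq_expect_mul_sub hL, hexpect_mul, hexpect, hexpect, hdisjoint,
    Nat.cast_descFactorial_two, Nat.cast_descFactorial_two, Nat.cast_descFactorial_two,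
    Nat.cast_descFactorial_four]
  ring
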